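/- Let X be a reflexive Banach space with X* λ-superprojective. Then X is (1+λ)-subprojective: every infinite-dimensional closed subspace of X contains an infinite-dimensional closed subspace that is (1+λ)-complemented in X. -/

import Mathlib

open NormedSpace Metric Set Filter
open scoped ENNReal

noncomputable section

/-- Hausdorff measure of noncompactness of a set. -/
def hchi {Y : Type*} [SeminormedAddCommGroup Y] (A : Set Y) : ℝ :=
  sInf { r : ℝ | ∃ F : Finset Y, ∀ a ∈ A, ∃ y ∈ F, dist a y ≤ r }

variable {X Y Z : Type*} [NormedAddCommGroup X] [NormedSpace ℝ X]
  [NormedAddCommGroup Y] [NormedSpace ℝ Y]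

/-- χ(T) = Hausdorff measure of noncompactness of T(B_X). -/
def chiOp (T : X →L[ℝ] Y) : ℝ := hchi (T '' closedBall 0 1)

/-- SS(T): the quantity measuring strict singularity. -/
def SS (T : X →L[ℝ] Y) : ℝ :=
  sSup { c : ℝ | ∃ M : Submodule ℝ X, IsClosed (M : Set X) ∧ ¬ FiniteDimensional ℝ M ∧
      c = sInf { r : ℝ | ∃ x ∈ M, ‖x‖ = 1 ∧ r = ‖T x‖ } }

/-- SS_Z(T): the quantity measuring Z-strict singularity. -/
def SSZ (Z : Type*) [NormedAddCommGroup Z] [NormedSpace ℝ Z] (T : X →L[ℝ] Y) : ℝ :=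
  sSup { r : ℝ | ∃ R : Z →L[ℝ] X, ∃ c : ℝ, 0 < c ∧ (∀ z, c * ‖z‖ ≤ ‖T (R z)‖) ∧ r = c / ‖R‖ }

/-- The adjoint (dual) operator T* : Y* → X*. -/
def adjOp (T : X →L[ℝ] Y) : StrongDual ℝ Y →L[ℝ] StrongDual ℝ X :=
  (ContinuousLinearMap.compL ℝ X Y ℝ).flip T

/-- δ(S) for a (surjective) map S: the supremum of δ > 0 with δ·B ⊆ S(B). -/
def deltaQ {W : Type*} [SeminormedAddCommGroup W] (S : X → W) : ℝ :=
  sSup { d : ℝ | 0 < d ∧ ∀ w : W, ‖w‖ ≤ d → ∃ x : X, ‖x‖ ≤ 1 ∧ S x = w }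

/-- SCS(T): the quantity measuring strict cosingularity. -/
def SCS (T : X →L[ℝ] Y) : ℝ :=
  sSup { r : ℝ | ∃ N : Submodule ℝ Y, IsClosed (N : Set Y) ∧ ¬ FiniteDimensional ℝ (Y ⧸ N) ∧
      Function.Surjective (fun x : X => (Submodule.Quotient.mk (T x) : Y ⧸ N)) ∧
      r = deltaQ (fun x : X => (Submodule.Quotient.mk (T x) : Y ⧸ N)) }

/-- SCS_Z(T): the quantity measuring Z-strict cosingularity. -/
def SCSZ (Z : Type*) [NormedAddCommGroup Z] [NormedSpace ℝ Z] (T : X →L[ℝ] Y) : ℝ :=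
  sSup { r : ℝ | ∃ S : Y →L[ℝ] Z, Function.Surjective (fun x : X => S (T x)) ∧
      r = deltaQ (fun x : X => S (T x)) / ‖S‖ }

/-- The annihilator M^⊥ in the continuous dual. -/
def annih (M : Submodule ℝ X) : Submodule ℝ (StrongDual ℝ X) where
  carrier := { f | ∀ x ∈ M, f x = 0 }
  add_mem' := by intro f g hf hg x hx; simp [hf x hx, hg x hx]
  zero_mem' := by intro x _; simp
  smul_mem' := by intro c f hf x hx; simp [hf x hx]

/-- The quantity wk_Z(A) measuring weak non-compactness. -/
def wkk (Z : Type*) [NormedAddCommGroup Z] [NormedSpace ℝ Z] (A : Set Z) : ℝ :=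
  sSup { r : ℝ | ∃ φ : StrongDual ℝ (StrongDual ℝ Z),
      StrongDual.toWeakDual φ ∈ closure (StrongDual.toWeakDual '' (inclusionInDoubleDual ℝ Z '' A)) ∧
      r = Metric.infDist φ (Set.range (inclusionInDoubleDual ℝ Z)) }

/-- A Banach space is λ-subprojective. -/
def Subprojective (lam : ℝ) (Y : Type*) [NormedAddCommGroup Y] [NormedSpace ℝ Y] : Prop :=
  ∀ M : Submodule ℝ Y, IsClosed (M : Set Y) → ¬ FiniteDimensional ℝ M →
    ∃ N : Submodule ℝ Y, N ≤ M ∧ IsClosed (N : Set Y) ∧ ¬ FiniteDimensional ℝ N ∧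
      ∃ P : Y →L[ℝ] Y, ‖P‖ ≤ lam ∧ LinearMap.range (P : Y →ₗ[ℝ] Y) = N ∧ ∀ y, P (P y) = P y

/-- A Banach space is λ-superprojective. -/
def Superprojective (lam : ℝ) (Y : Type*) [NormedAddCommGroup Y] [NormedSpace ℝ Y] : Prop :=
  ∀ M : Submodule ℝ Y, IsClosed (M : Set Y) → ¬ FiniteDimensional ℝ (Y ⧸ M) →
    ∃ N : Submodule ℝ Y, M ≤ N ∧ IsClosed (N : Set Y) ∧ ¬ FiniteDimensional ℝ (Y ⧸ N) ∧
      ∃ P : Y →L[ℝ] Y, ‖P‖ ≤ lam ∧ LinearMap.range (P : Y →ₗ[ℝ] Y) = N ∧ ∀ y, P (P y) = P y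

end


/-!
Let `M ⊆ X` be closed and infinite-dimensional. Its annihilator `M^⊥ ⊆ X*` is infinite-codimensional,
since `X* ⧸ M^⊥` and `M` are in separating duality. Superprojectivity of `X*` gives a projection `P`
of norm `≤ λ` onto an infinite-codimensional `N ⊇ M^⊥`. Reflexivity makes `P` the adjoint of a
projection `Q` on `X` with `‖Q‖ ≤ ‖P‖`, and `1 - Q` projects onto a subspace whose annihilator is
exactly `N`: by Hahn–Banach it lies inside `M`, and it is infinite-dimensional because `X* ⧸ N` is.
-/

open ContinuousLinearMap

section Preadjoint

variable {𝕜 E : Type*} [RCLike 𝕜] [NormedAddCommGroup E] [NormedSpace 𝕜 E]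
  (hE : Function.Surjective (inclusionInDoubleDual 𝕜 E)) (P : StrongDual 𝕜 E →L[𝕜] StrongDual 𝕜 E)

noncomputable def doubleDualEquiv : E ≃ₗᵢ[𝕜] StrongDual 𝕜 (StrongDual 𝕜 E) :=
  LinearIsometryEquiv.ofSurjective (inclusionInDoubleDualLi 𝕜) hE

@[simp]
theorem doubleDualEquiv_apply (x : E) (f : StrongDual 𝕜 E) : doubleDualEquiv hE x f = f x := rfl

noncomputable def preadjoint : E →L[𝕜] E :=
  (doubleDualEquiv hE).symm.toLinearIsometry.toContinuousLinearMap ∘L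
    (compL 𝕜 (StrongDual 𝕜 E) (StrongDual 𝕜 E) 𝕜).flip P ∘L
    (doubleDualEquiv hE).toLinearIsometry.toContinuousLinearMap

theorem doubleDualEquiv_preadjoint (x : E) :
    doubleDualEquiv hE (preadjoint hE P x) = (doubleDualEquiv hE x).comp P := by
  simp [preadjoint]

theorem apply_preadjoint (f : StrongDual 𝕜 E) (x : E) : f (preadjoint hE P x) = P f x := by
  simpa using congr($(doubleDualEquiv_preadjoint hE P x) f)

theorem norm_preadjoint_le : ‖preadjoint hE P‖ ≤ ‖P‖ := by
  refine opNorm_le_bound _ (norm_nonneg P) fun x => ?_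
  calc ‖preadjoint hE P x‖ = ‖(doubleDualEquiv hE x).comp P‖ := by
        rw [← doubleDualEquiv_preadjoint, LinearIsometryEquiv.norm_map]
    _ ≤ ‖doubleDualEquiv hE x‖ * ‖P‖ := opNorm_comp_le _ _
    _ = ‖P‖ * ‖x‖ := by rw [LinearIsometryEquiv.norm_map, mul_comm]

theorem isIdempotentElem_preadjoint {P : StrongDual 𝕜 E →L[𝕜] StrongDual 𝕜 E}
    (hP : IsIdempotentElem P) : IsIdempotentElem (preadjoint hE P) := by
  ext x
  refine (SeparatingDual.eq_iff_forall_dual_eq (R := 𝕜)).2 fun f => ?_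
  change f (preadjoint hE P (preadjoint hE P x)) = f (preadjoint hE P x)
  rw [apply_preadjoint, apply_preadjoint, apply_preadjoint]
  exact congr($hP.eq f x)

end Preadjoint

section Annihilator

variable {X : Type*} [NormedAddCommGroup X] [NormedSpace ℝ X]

theorem isClosed_annih (M : Submodule ℝ X) : IsClosed (annih M : Set (StrongDual ℝ X)) := by
  have : (annih M : Set (StrongDual ℝ X)) = ⋂ x ∈ M, {f | f x = 0} := by
    ext f; simp [annih]
  rw [this]
  exact isClosed_biInter fun x _ => isClosed_eq (apply ℝ ℝ x).continuous continuous_const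

theorem mem_of_forall_mem_annih {M : Submodule ℝ X} (hM : IsClosed (M : Set X)) {x : X}
    (hx : ∀ f ∈ annih M, f x = 0) : x ∈ M := by
  -- as an instance, this makes `X ⧸ M` a normed space, whose dual separates points
  have : IsClosed (M : Set X) := hM
  by_contra hxM
  obtain ⟨g, hg⟩ := SeparatingDual.exists_ne_zero (R := ℝ)
    ((Submodule.Quotient.mk_eq_zero M).not.2 hxM)
  exact hg (hx (g ∘L M.mkQL) (fun m hm => by simp [(Submodule.Quotient.mk_eq_zero M).2 hm]))

theorem le_of_annih_le {M K : Submodule ℝ X} (hM : IsClosed (M : Set X))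
    (h : annih M ≤ annih K) : K ≤ M :=
  fun x hx => mem_of_forall_mem_annih hM fun _ hf => h hf x hx

noncomputable def annihPairing (K : Submodule ℝ X) :
    (StrongDual ℝ X ⧸ annih K) →ₗ[ℝ] Module.Dual ℝ K :=
  (annih K).liftQ (K.subtype.dualMap ∘ₗ coeLM ℝ) fun f hf => by ext x; exact hf x x.2

@[simp]
theorem annihPairing_mk (K : Submodule ℝ X) (f : StrongDual ℝ X) (x : K) :
    annihPairing K (Submodule.Quotient.mk f) x = f x := rfl

theorem annihPairing_injective (K : Submodule ℝ X) : Function.Injective (annihPairing K) := by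
  refine (injective_iff_map_eq_zero _).2 fun q hq => ?_
  obtain ⟨f, rfl⟩ := Submodule.Quotient.mk_surjective _ q
  exact (Submodule.Quotient.mk_eq_zero _).2 fun x hx => by simpa using congr($hq ⟨x, hx⟩)

theorem annihPairing_flip_injective (K : Submodule ℝ X) :
    Function.Injective (annihPairing K).flip := by
  refine fun x y hxy => Subtype.ext <|
    (SeparatingDual.eq_iff_forall_dual_eq (R := ℝ)).2 fun f => ?_
  simpa using congr($hxy (Submodule.Quotient.mk f))

theorem finiteDimensional_quotient_annih (K : Submodule ℝ X) [FiniteDimensional ℝ K] :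
    FiniteDimensional ℝ (StrongDual ℝ X ⧸ annih K) :=
  .of_injective _ (annihPairing_injective K)

theorem finiteDimensional_of_finiteDimensional_quotient_annih (K : Submodule ℝ X)
    [FiniteDimensional ℝ (StrongDual ℝ X ⧸ annih K)] : FiniteDimensional ℝ K :=
  .of_injective _ (annihPairing_flip_injective K)

theorem annih_range_one_sub_preadjoint (hX : Function.Surjective (inclusionInDoubleDual ℝ X))
    {P : StrongDual ℝ X →L[ℝ] StrongDual ℝ X} (hP : IsIdempotentElem P) :
    annih (LinearMap.range ((1 - preadjoint hX P : X →L[ℝ] X) : X →ₗ[ℝ] X)) =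
      LinearMap.range (P : StrongDual ℝ X →ₗ[ℝ] StrongDual ℝ X) := by
  ext f
  rw [LinearMap.IsIdempotentElem.mem_range_iff hP.toLinearMap]
  change (∀ y ∈ LinearMap.range _, f y = 0) ↔ _
  simp only [LinearMap.mem_range, forall_exists_index, forall_apply_eq_imp_iff, coe_coe,
    FunLike.coe_sub, Pi.sub_apply, map_sub, apply_preadjoint, sub_eq_zero,
    ContinuousLinearMap.ext_iff]
  exact forall_congr' fun _ => eq_comm

end Annihilator

theorem stmt16_general {X : Type*} [NormedAddCommGroup X] [NormedSpace ℝ X]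
    (hrefl : Function.Surjective (inclusionInDoubleDual ℝ X))
    (lam : ℝ) (h : Superprojective lam (StrongDual ℝ X)) :
    Subprojective (1 + lam) X := by
  intro M hM hMinf
  obtain ⟨N, hMN, -, hNinf, P, hPnorm, rfl, hPidem⟩ := h (annih M) (isClosed_annih M)
    fun _ => hMinf (finiteDimensional_of_finiteDimensional_quotient_annih M)
  have hP : IsIdempotentElem P := ContinuousLinearMap.ext hPidem
  have hann := annih_range_one_sub_preadjoint hrefl hP
  set R : X →L[ℝ] X := 1 - preadjoint hrefl P
  have hR : IsIdempotentElem R := (isIdempotentElem_preadjoint hrefl hP).one_sub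
  refine ⟨LinearMap.range (R : X →ₗ[ℝ] X), le_of_annih_le hM (hann.symm ▸ hMN),
    hR.isClosed_range, fun _ => hNinf (hann ▸ finiteDimensional_quotient_annih _), R, ?_, rfl,
    fun y => congr($hR.eq y)⟩
  calc ‖R‖ ≤ ‖ContinuousLinearMap.id ℝ X‖ + ‖preadjoint hrefl P‖ := norm_sub_le _ _
    _ ≤ 1 + lam := add_le_add norm_id_le ((norm_preadjoint_le hrefl P).trans hPnorm)

theorem stmt16 {X : Type*} [NormedAddCommGroup X] [NormedSpace ℝ X] [CompleteSpace X]
    (hrefl : Function.Surjective (inclusionInDoubleDual ℝ X))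
    (lam : ℝ) (hlam : 1 ≤ lam) (h : Superprojective lam (StrongDual ℝ X)) :
    Subprojective (1 + lam) X :=
  stmt16_general hrefl lam h
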